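/- arXiv:1907.02353 — 2 statements merged into one kernel-verified Lean document; each statement's English description precedes it below -/
import Mathlib

section
/- Let G be a finite undirected graph with disjoint vertex sets S and T, and let Z_1,...,Z_k be the drainage of (G,S,T). Then every minimum edge (S,T)-cut X has a front: there exists a smallest index i = i(X) with 1 ≤ i ≤ k such that X ∩ Z_i ≠ ∅, and moreover X contains no edge with both endpoints in R(Z_{i(X)},S). -/
open SimpleGraph

variable {V : Type*}

/-- `X` is an edge `(S,T)`-cut: after deleting the edges of `X`,
no vertex of `S` can reach a vertex of `T`. -/
def EdgeCut (G : SimpleGraph V) (S T : Set V) (X : Finset (Sym2 V)) : Prop :=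
  ∀ s ∈ S, ∀ t ∈ T, ¬ (G.deleteEdges ↑X).Reachable s t

/-- `X` is a minimum edge `(S,T)`-cut. -/
def MinEdgeCut (G : SimpleGraph V) (S T : Set V) (X : Finset (Sym2 V)) : Prop :=
  EdgeCut G S T X ∧ ∀ Y : Finset (Sym2 V), EdgeCut G S T Y → X.card ≤ Y.card

/-- `R(X,S)`: vertices reachable from `S` in `G` deprived of the edges of `X`. -/
def Rside (G : SimpleGraph V) (X : Finset (Sym2 V)) (S : Set V) : Set V :=
  {v | ∃ s ∈ S, (G.deleteEdges ↑X).Reachable s v}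

/-- A minimum closest `(S,T)`-cut: a minimum cut `Z` such that no other cut `X'`
satisfies `|X'| ≤ |Z|` and `R(X',S) ⊆ R(Z,S)`. -/
def MinClosestCut (G : SimpleGraph V) (S T : Set V) (Z : Finset (Sym2 V)) : Prop :=
  MinEdgeCut G S T Z ∧
    ∀ X' : Finset (Sym2 V), EdgeCut G S T X' → X' ≠ Z →
      ¬ (X'.card ≤ Z.card ∧ Rside G X' S ⊆ Rside G Z S)

/-- `G` deprived of the vertex set `U` (kept on the same vertex type). -/
def deprive (G : SimpleGraph V) (U : Set V) : SimpleGraph V where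
  Adj u v := G.Adj u v ∧ u ∉ U ∧ v ∉ U
  symm := ⟨fun _ _ ⟨h, hu, hv⟩ => ⟨h.symm, hv, hu⟩⟩
  loopless := ⟨fun u ⟨h, _, _⟩ => G.ne_of_adj h rfl⟩

/-- `V^T(Z)` relative to sources `S`: the endpoints of edges of `Z` that are not
reachable from `S` once `Z` is removed. -/
def nextSources (G : SimpleGraph V) (Z : Finset (Sym2 V)) (S : Set V) : Set V :=
  {v | v ∉ Rside G Z S ∧ ∃ u, s(u, v) ∈ Z}

/-- The drainage `Z 1, ..., Z k` of the instance `(G,S,T)` with minimum cut size `p`: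
`Z 1` is the minimum closest `(S,T)`-cut, and `Z (i+1)` is the minimum closest
`(S_{i+1},T)`-cut of size `p` in `G` deprived of `R(Z i, S)`; the construction stops
at `k`, when no further cut of size `p` exists. -/
def IsDrainage (G : SimpleGraph V) (S T : Set V) (p k : ℕ)
    (Z : ℕ → Finset (Sym2 V)) : Prop :=
  1 ≤ k ∧
  MinClosestCut G S T (Z 1) ∧ (Z 1).card = p ∧
  (∀ i, 1 ≤ i → i < k →
    MinClosestCut (deprive G (Rside G (Z i) S)) (nextSources G (Z i) S) T (Z (i + 1)) ∧
      (Z (i + 1)).card = p) ∧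
  (∀ X : Finset (Sym2 V),
    EdgeCut (deprive G (Rside G (Z k) S)) (nextSources G (Z k) S) T X → p < X.card)

/-! Each drainage cut `Z i` is a minimum `(S,T)`-cut of `G`. By induction on `i`, a minimum cut
`X` avoiding `Z 1, …, Z (i-1)` satisfies `R(Z i, S) ⊆ R(X, S)`: it remains a minimum cut of the
deprived instance in which `Z i` is the closest cut, and uncrossing (submodularity of the edge
boundary) puts a closest cut behind every minimum cut. If `X` avoided every `Z i`, it would be a
cut of size `p` of the instance at which the drainage stops; so a front `i` exists, and as each
edge of the minimum cut `X` has exactly one endpoint in `R(X, S) ⊇ R(Z i, S)`, none lies inside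
`R(Z i, S)`. -/

section Reachability

variable {G H : SimpleGraph V} {S S' T U : Set V} {W X Y Z : Finset (Sym2 V)}

@[simp]
lemma deprive_adj {u v : V} : (deprive G U).Adj u v ↔ G.Adj u v ∧ u ∉ U ∧ v ∉ U := Iff.rfl

lemma deprive_le : deprive G U ≤ G := fun _ _ h => h.1

lemma subset_Rside : S ⊆ Rside G W S := fun s hs => ⟨s, hs, .refl s⟩

lemma Rside_adj {u v : V} (hu : u ∈ Rside G W S) (h : (G.deleteEdges ↑W).Adj u v) :
    v ∈ Rside G W S :=
  let ⟨s, hs, hr⟩ := hu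
  ⟨s, hs, hr.trans h.reachable⟩

lemma Rside_subset_of_closed {P : Set V} (hS : S ⊆ P)
    (hP : ∀ ⦃a b⦄, (G.deleteEdges ↑W).Adj a b → a ∈ P → b ∈ P) : Rside G W S ⊆ P := by
  suffices h : ∀ {a x}, (G.deleteEdges ↑W).Walk a x → a ∈ P → x ∈ P by
    rintro x ⟨s, hs, ⟨w⟩⟩
    exact h w (hS hs)
  intro a x w
  induction w with
  | nil => exact id
  | cons h _ ih => exact fun ha => ih (hP h ha)

lemma Rside_mono_graph (hHG : H ≤ G) (hS' : S' ⊆ Rside G W S) :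
    Rside H W S' ⊆ Rside G W S := by
  rintro x ⟨s, hs, hr⟩
  obtain ⟨s₀, hs₀, hr₀⟩ := hS' hs
  exact ⟨s₀, hs₀, hr₀.trans (hr.mono (deleteEdges_mono hHG))⟩

lemma edgeCut_iff_disjoint : EdgeCut G S T X ↔ Disjoint T (Rside G X S) := by
  simp only [EdgeCut, Set.disjoint_left, Rside, Set.mem_ofPred_eq, not_exists, not_and]
  exact ⟨fun h t ht s hs => h s hs t ht, fun h s hs t ht => h ht s hs⟩

lemma MinEdgeCut.of_card_le (hZ : MinEdgeCut G S T Z) (hY : EdgeCut G S T Y)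
    (hcard : Y.card ≤ Z.card) : MinEdgeCut G S T Y :=
  ⟨hY, fun X hX => hcard.trans (hZ.2 X hX)⟩

variable [DecidableEq V]

lemma Rside_erase_subset {u v : V}
    (hiff : G.Adj u v → (u ∈ Rside G W S ↔ v ∈ Rside G W S)) :
    Rside G (W.erase s(u, v)) S ⊆ Rside G W S := by
  refine Rside_subset_of_closed subset_Rside fun a b hab ha => ?_
  rw [deleteEdges_adj, Finset.mem_coe, Finset.mem_erase, not_and'] at hab
  by_cases hW : s(a, b) ∈ W
  · rcases Sym2.eq_iff.1 (not_not.1 (hab.2 hW)) with ⟨rfl, rfl⟩ | ⟨rfl, rfl⟩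
    exacts [(hiff hab.1).1 ha, (hiff hab.1.symm).2 ha]
  · exact Rside_adj ha (by simpa using ⟨hab.1, hW⟩)

/-- Otherwise `X` minus this edge would still be a cut. -/
lemma MinEdgeCut.adj_and_mem_Rside_iff_notMem (hX : MinEdgeCut G S T X) {u v : V}
    (huv : s(u, v) ∈ X) : G.Adj u v ∧ (u ∈ Rside G X S ↔ v ∉ Rside G X S) := by
  by_contra hcross
  have hcut : EdgeCut G S T (X.erase s(u, v)) := by
    rw [edgeCut_iff_disjoint]
    exact (edgeCut_iff_disjoint.1 hX.1).mono_right (Rside_erase_subset (by tauto))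
  have := hX.2 _ hcut
  rw [Finset.card_erase_of_mem huv] at this
  have := Finset.card_pos.2 ⟨_, huv⟩
  omega

end Reachability

section EdgeBoundary

variable [Finite V] {G : SimpleGraph V} {S T U A B : Set V} {W X Z : Finset (Sym2 V)}

noncomputable def edgeBoundary (G : SimpleGraph V) (U : Set V) : Finset (Sym2 V) :=
  (Set.toFinite {e | e ∈ G.edgeSet ∧ ∃ u ∈ U, ∃ v ∉ U, e = s(u, v)}).toFinset

lemma mem_edgeBoundary {u v : V} :
    s(u, v) ∈ edgeBoundary G U ↔ G.Adj u v ∧ (u ∈ U ∧ v ∉ U ∨ v ∈ U ∧ u ∉ U) := by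
  simp only [edgeBoundary, Set.Finite.mem_toFinset, Set.mem_ofPred_eq, mem_edgeSet]
  refine and_congr_right fun _ => ⟨?_, ?_⟩
  · rintro ⟨a, ha, b, hb, hab⟩
    rcases Sym2.eq_iff.1 hab with ⟨rfl, rfl⟩ | ⟨rfl, rfl⟩
    exacts [.inl ⟨ha, hb⟩, .inr ⟨ha, hb⟩]
  · rintro (⟨hu, hv⟩ | ⟨hv, hu⟩)
    exacts [⟨u, hu, v, hv, rfl⟩, ⟨v, hv, u, hu, Sym2.eq_swap⟩]

lemma edgeBoundary_Rside_subset : edgeBoundary G (Rside G W S) ⊆ W := by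
  intro e he
  induction e with
  | h u v =>
    by_contra hW
    obtain ⟨hadj, ⟨hu, hv⟩ | ⟨hv, hu⟩⟩ := mem_edgeBoundary.1 he
    · exact hv (Rside_adj hu (by simpa using ⟨hadj, hW⟩))
    · exact hu (Rside_adj hv (by simpa [Sym2.eq_swap] using ⟨hadj.symm, hW⟩))

lemma Rside_edgeBoundary_subset (hS : S ⊆ U) : Rside G (edgeBoundary G U) S ⊆ U :=
  Rside_subset_of_closed hS fun a b hab ha => by
    by_contra hb
    rw [deleteEdges_adj, Finset.mem_coe, mem_edgeBoundary] at hab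
    exact hab.2 ⟨hab.1, .inl ⟨ha, hb⟩⟩

lemma edgeCut_edgeBoundary (hS : S ⊆ U) (hT : Disjoint T U) :
    EdgeCut G S T (edgeBoundary G U) :=
  edgeCut_iff_disjoint.2 (hT.mono_right (Rside_edgeBoundary_subset hS))

variable [DecidableEq V]

lemma card_edgeBoundary_inter_add_card_edgeBoundary_union_le :
    (edgeBoundary G (A ∩ B)).card + (edgeBoundary G (A ∪ B)).card ≤
      (edgeBoundary G A).card + (edgeBoundary G B).card := by
  have hunion : edgeBoundary G (A ∩ B) ∪ edgeBoundary G (A ∪ B) ⊆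
      edgeBoundary G A ∪ edgeBoundary G B := by
    intro e
    induction e with
    | h u v =>
      simp only [Finset.mem_union, mem_edgeBoundary, Set.mem_inter_iff, Set.mem_union]
      tauto
  have hinter : edgeBoundary G (A ∩ B) ∩ edgeBoundary G (A ∪ B) ⊆
      edgeBoundary G A ∩ edgeBoundary G B := by
    intro e
    induction e with
    | h u v =>
      simp only [Finset.mem_inter, mem_edgeBoundary, Set.mem_inter_iff, Set.mem_union]
      tauto
  rw [← Finset.card_union_add_card_inter, ← Finset.card_union_add_card_inter (edgeBoundary G A)]
  exact add_le_add (Finset.card_le_card hunion) (Finset.card_le_card hinter)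

/-- Uncrossing: the boundary of `R(X,S) ∩ R(Z,S)` is a cut no larger than `Z` whose side lies
in `R(Z,S)`, so closestness forces it to be `Z` itself. -/
lemma MinClosestCut.Rside_subset (hZ : MinClosestCut G S T Z) (hX : MinEdgeCut G S T X) :
    Rside G Z S ⊆ Rside G X S := by
  set A := Rside G X S
  set B := Rside G Z S
  have hSAB : S ⊆ A ∩ B := Set.subset_inter subset_Rside subset_Rside
  have hTA : Disjoint T A := edgeCut_iff_disjoint.1 hX.1
  have hTB : Disjoint T B := edgeCut_iff_disjoint.1 hZ.1.1
  have hcut_inter : EdgeCut G S T (edgeBoundary G (A ∩ B)) :=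
    edgeCut_edgeBoundary hSAB (hTA.mono_right Set.inter_subset_left)
  have hcut_union : EdgeCut G S T (edgeBoundary G (A ∪ B)) :=
    edgeCut_edgeBoundary (hSAB.trans (Set.inter_subset_left.trans Set.subset_union_left))
      (hTA.union_right hTB)
  have hside : Rside G (edgeBoundary G (A ∩ B)) S ⊆ A ∩ B := Rside_edgeBoundary_subset hSAB
  have hcard : (edgeBoundary G (A ∩ B)).card ≤ Z.card := by
    have := hX.2 _ hcut_inter
    have := hZ.1.2 _ hcut_union
    have := hZ.1.2 _ hX.1
    have := hX.2 _ hZ.1.1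
    have : (edgeBoundary G A).card ≤ X.card := Finset.card_le_card edgeBoundary_Rside_subset
    have : (edgeBoundary G B).card ≤ Z.card := Finset.card_le_card edgeBoundary_Rside_subset
    have := card_edgeBoundary_inter_add_card_edgeBoundary_union_le (G := G) (A := A) (B := B)
    omega
  have hZeq : edgeBoundary G (A ∩ B) = Z := by
    by_contra hne
    exact hZ.2 _ hcut_inter hne ⟨hcard, hside.trans Set.inter_subset_right⟩
  exact (hZeq ▸ hside).trans Set.inter_subset_left

end EdgeBoundary

section Deprive

variable {G : SimpleGraph V} {S T : Set V} {X Y Z Z' : Finset (Sym2 V)}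

/-- A path leaving `R(Z,S)` does so through an edge of `Z`, hence through a vertex of
`nextSources G Z S`, and afterwards stays in `G` deprived of `R(Z,S)`. -/
lemma Rside_subset_union_Rside_deprive (W : Finset (Sym2 V)) :
    Rside G W S ⊆
      Rside G Z S ∪ Rside (deprive G (Rside G Z S)) W (nextSources G Z S) := by
  refine Rside_subset_of_closed (subset_Rside.trans Set.subset_union_left) fun a b hab ha => ?_
  rw [deleteEdges_adj] at hab
  by_cases hb : b ∈ Rside G Z S
  · exact .inl hb
  by_cases haR : a ∈ Rside G Z S
  · have hZ : s(a, b) ∈ Z := by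
      by_contra hZ
      exact hb (Rside_adj haR (by simpa using ⟨hab.1, hZ⟩))
    exact .inr (subset_Rside ⟨hb, a, hZ⟩)
  · exact .inr (Rside_adj (ha.resolve_left haR) (by simpa using ⟨⟨hab.1, haR, hb⟩, hab.2⟩))

lemma EdgeCut.of_deprive (hZ : EdgeCut G S T Z)
    (hY : EdgeCut (deprive G (Rside G Z S)) (nextSources G Z S) T Y) : EdgeCut G S T Y := by
  rw [edgeCut_iff_disjoint] at hZ hY ⊢
  exact (hZ.union_right hY).mono_right (Rside_subset_union_Rside_deprive Y)

lemma EdgeCut.deprive_of_subset_Rside {U S' : Set V} (hX : EdgeCut G S T X)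
    (hS' : S' ⊆ Rside G X S) : EdgeCut (deprive G U) S' T X := by
  rw [edgeCut_iff_disjoint] at hX ⊢
  exact hX.mono_right (Rside_mono_graph deprive_le hS')

variable [DecidableEq V]

lemma nextSources_subset_Rside (hZ : MinEdgeCut G S T Z) (hZX : Rside G Z S ⊆ Rside G X S)
    (hXZ : Disjoint X Z) : nextSources G Z S ⊆ Rside G X S := by
  rintro v ⟨hv, u, huv⟩
  obtain ⟨hadj, hcross⟩ := hZ.adj_and_mem_Rside_iff_notMem huv
  exact Rside_adj (hZX (hcross.2 hv)) (by simpa using ⟨hadj, Finset.disjoint_right.1 hXZ huv⟩)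

lemma MinClosestCut.Rside_subset_of_deprive [Finite V] (hX : MinEdgeCut G S T X)
    (hZ : MinEdgeCut G S T Z) (hZX : Rside G Z S ⊆ Rside G X S) (hXZ : Disjoint X Z)
    (hZ' : MinClosestCut (deprive G (Rside G Z S)) (nextSources G Z S) T Z') :
    Rside G Z' S ⊆ Rside G X S := by
  set R := Rside G Z S
  set S' := nextSources G Z S
  have hnext : S' ⊆ Rside G X S := nextSources_subset_Rside hZ hZX hXZ
  have hXmin : MinEdgeCut (deprive G R) S' T X :=
    ⟨hX.1.deprive_of_subset_Rside hnext, fun Y hY => hX.2 Y (hZ.1.of_deprive hY)⟩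
  calc Rside G Z' S ⊆ R ∪ Rside (deprive G R) Z' S' := Rside_subset_union_Rside_deprive Z'
    _ ⊆ R ∪ Rside (deprive G R) X S' := Set.union_subset_union_right _ (hZ'.Rside_subset hXmin)
    _ ⊆ Rside G X S := Set.union_subset hZX (Rside_mono_graph deprive_le hnext)

end Deprive

namespace IsDrainage

variable {G : SimpleGraph V} {S T : Set V} {p k : ℕ} {Z : ℕ → Finset (Sym2 V)}
  {X : Finset (Sym2 V)}

lemma minEdgeCut (hZ : IsDrainage G S T p k Z) {i : ℕ} (h1 : 1 ≤ i) (hik : i ≤ k) :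
    MinEdgeCut G S T (Z i) := by
  induction i, h1 using Nat.le_induction with
  | base => exact hZ.2.1.1
  | succ i h1 ih =>
    obtain ⟨hclosest, hcard⟩ := hZ.2.2.2.1 i h1 (by omega)
    exact hZ.2.1.1.of_card_le ((ih (by omega)).1.of_deprive hclosest.1.1)
      (hcard.trans hZ.2.2.1.symm).le

variable [Finite V] [DecidableEq V]

lemma Rside_subset (hZ : IsDrainage G S T p k Z) (hX : MinEdgeCut G S T X) {i : ℕ}
    (h1 : 1 ≤ i) (hik : i ≤ k) (hdisj : ∀ j, 1 ≤ j → j < i → Disjoint X (Z j)) :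
    Rside G (Z i) S ⊆ Rside G X S := by
  induction i, h1 using Nat.le_induction with
  | base => exact hZ.2.1.Rside_subset hX
  | succ i h1 ih =>
    exact (hZ.2.2.2.1 i h1 (by omega)).1.Rside_subset_of_deprive hX (hZ.minEdgeCut h1 (by omega))
      (ih (by omega) fun j hj hji => hdisj j hj (by omega)) (hdisj i h1 (by omega))

lemma exists_inter_nonempty (hZ : IsDrainage G S T p k Z) (hX : MinEdgeCut G S T X) :
    ∃ i, 1 ≤ i ∧ i ≤ k ∧ (X ∩ Z i).Nonempty := by
  by_contra! hdisj
  replace hdisj : ∀ i, 1 ≤ i → i ≤ k → Disjoint X (Z i) := fun i h1 hik =>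
    Finset.disjoint_iff_inter_eq_empty.2 (hdisj i h1 hik)
  have hRk := hZ.Rside_subset hX hZ.1 le_rfl fun j hj hjk => hdisj j hj hjk.le
  have hnext := nextSources_subset_Rside (hZ.minEdgeCut hZ.1 le_rfl) hRk (hdisj k hZ.1 le_rfl)
  have hlarge := hZ.2.2.2.2 X (hX.1.deprive_of_subset_Rside hnext)
  have hsmall : X.card ≤ p := hZ.2.2.1 ▸ hX.2 _ hZ.2.1.1.1
  omega

end IsDrainage

theorem min_cut_has_front_general
    [Fintype V] [DecidableEq V] (G : SimpleGraph V) (S T : Set V)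
    (p k : ℕ) (Z : ℕ → Finset (Sym2 V))
    (hZ : IsDrainage G S T p k Z)
    (X : Finset (Sym2 V)) (hX : MinEdgeCut G S T X) :
    ∃ i, 1 ≤ i ∧ i ≤ k ∧ (X ∩ Z i).Nonempty ∧
      (∀ j, 1 ≤ j → j < i → X ∩ Z j = ∅) ∧
      ∀ u v, s(u, v) ∈ X → ¬ (u ∈ Rside G (Z i) S ∧ v ∈ Rside G (Z i) S) := by
  classical
  have hfront := hZ.exists_inter_nonempty hX
  obtain ⟨h1, hik, hne⟩ := Nat.find_spec hfront
  have hbefore : ∀ j, 1 ≤ j → j < Nat.find hfront → X ∩ Z j = ∅ := fun j hj hji =>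
    Finset.not_nonempty_iff_eq_empty.1 fun hne' => Nat.find_min hfront hji ⟨hj, by omega, hne'⟩
  refine ⟨_, h1, hik, hne, hbefore, fun u v huv ⟨hu, hv⟩ => ?_⟩
  have hR := hZ.Rside_subset hX h1 hik fun j hj hji =>
    Finset.disjoint_iff_inter_eq_empty.2 (hbefore j hj hji)
  exact (hX.adj_and_mem_Rside_iff_notMem huv).2.1 (hR hu) (hR hv)

/-- Every minimum edge `(S,T)`-cut `X` admits a front: a smallest
index `i` with `X ∩ Z i ≠ ∅`; moreover `X` has no edge with both endpoints in
`R(Z_{i(X)}, S)`. -/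
theorem min_cut_has_front
    [Fintype V] [DecidableEq V] (G : SimpleGraph V) (S T : Set V)
    (hST : Disjoint S T) (hS : S.Nonempty) (hT : T.Nonempty)
    (p k : ℕ) (Z : ℕ → Finset (Sym2 V))
    (hmin : ∃ X0 : Finset (Sym2 V), MinEdgeCut G S T X0 ∧ X0.card = p)
    (hZ : IsDrainage G S T p k Z)
    (X : Finset (Sym2 V)) (hX : MinEdgeCut G S T X) :
    ∃ i, 1 ≤ i ∧ i ≤ k ∧ (X ∩ Z i).Nonempty ∧
      (∀ j, 1 ≤ j → j < i → X ∩ Z j = ∅) ∧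
      ∀ u v, s(u, v) ∈ X → ¬ (u ∈ Rside G (Z i) S ∧ v ∈ Rside G (Z i) S) :=
  min_cut_has_front_general G S T p k Z hZ X hX
end

section
/- Let G be a finite undirected graph with disjoint vertex sets S and T, with drainage Z_1,...,Z_k, fixed Menger's paths, and mixed graph G_D. If B_h ⊊ Z_h is a closest dam, then its complement Z_h \ B_h is also a closest dam. -/
open SimpleGraph

variable {V : Type*}

/-- A family of `p` pairwise edge-disjoint `(S,T)`-paths (Menger's paths). -/
structure MengerFamily (G : SimpleGraph V) (S T : Set V) (p : ℕ) where
  a : Fin p → V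
  b : Fin p → V
  ha : ∀ j, a j ∈ S
  hb : ∀ j, b j ∈ T
  walk : ∀ j, G.Walk (a j) (b j)
  isPath : ∀ j, (walk j).IsPath
  edgeDisj : ∀ i j, i ≠ j → ∀ e, e ∈ (walk i).edges → e ∉ (walk j).edges

namespace MengerFamily

variable {G : SimpleGraph V} {S T : Set V} {p : ℕ}

/-- Arc of the mixed graph `G_D`: `(u,v)` is traversed in this direction by some
Menger path (oriented from `S` to `T`). -/
def Arc (M : MengerFamily G S T p) (u v : V) : Prop :=
  ∃ j, ∃ d ∈ (M.walk j).darts, d.toProd = (u, v)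

/-- Edges lying on some Menger path. -/
def pathEdge (M : MengerFamily G S T p) (e : Sym2 V) : Prop :=
  ∃ j, e ∈ (M.walk j).edges

/-- One step of reachability in the mixed graph `G_D` deprived of the dam `B`:
follow an arc in its direction, or an undirected edge in either direction. -/
def step (M : MengerFamily G S T p) (B : Finset (Sym2 V)) (u v : V) : Prop :=
  (M.Arc u v ∨ (G.Adj u v ∧ ¬ M.pathEdge s(u, v))) ∧ s(u, v) ∉ B

/-- Dry area `A*(B)`: the vertices not reachable from `S` in `G_D \ B`. -/
def dryArea (M : MengerFamily G S T p) (B : Finset (Sym2 V)) : Set V :=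
  {v | ¬ ∃ s ∈ S, Relation.ReflTransGen (M.step B) s v}

/-- Signature `σ(B)`: the set of Menger paths meeting `B`. -/
def sig (M : MengerFamily G S T p) (B : Finset (Sym2 V)) : Set (Fin p) :=
  {j | ∃ e ∈ B, e ∈ (M.walk j).edges}

/-- `S*(B)`: the tails of the arcs of `B`. -/
def Sstar (M : MengerFamily G S T p) (B : Finset (Sym2 V)) : Set V :=
  {u | ∃ v, M.Arc u v ∧ s(u, v) ∈ B}

/-- `T*(B)`: heads, outside the dry area, of edges leaving `S*(B) ∪ A*(B)`. -/
def Tstar (M : MengerFamily G S T p) (B : Finset (Sym2 V)) : Set V :=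
  {v | v ∉ M.dryArea B ∧ ∃ u ∈ M.Sstar B ∪ M.dryArea B, G.Adj u v}

/-- `V*(B) = S*(B) ∪ A*(B) ∪ T*(B)`. -/
def Vstar (M : MengerFamily G S T p) (B : Finset (Sym2 V)) : Set V :=
  M.Sstar B ∪ M.dryArea B ∪ M.Tstar B

/-- `E*(B)`: edges with both endpoints in `V*(B)`, at least one of them in `A*(B)`. -/
def Estar (M : MengerFamily G S T p) (B : Finset (Sym2 V)) : Set (Sym2 V) :=
  {e | ∃ u v, e = s(u, v) ∧ G.Adj u v ∧ u ∈ M.dryArea B ∧ v ∈ M.Vstar B}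

/-- The graph `G*(B)` of the dry instance `D(I,B)`. -/
def Gstar (M : MengerFamily G S T p) (B : Finset (Sym2 V)) : SimpleGraph V where
  Adj u v := G.Adj u v ∧ s(u, v) ∈ M.Estar B
  symm := ⟨fun _ _ ⟨h, he⟩ => ⟨h.symm, by rwa [Sym2.eq_swap]⟩⟩
  loopless := ⟨fun u ⟨h, _⟩ => G.ne_of_adj h rfl⟩

end MengerFamily

/-- A dam of the drainage `Z` (of length `k`): a nonempty subset of some
minimum drainage cut `Z i`. -/
def IsDam (Z : ℕ → Finset (Sym2 V)) (k i : ℕ) (B : Finset (Sym2 V)) : Prop :=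
  1 ≤ i ∧ i ≤ k ∧ B ⊆ Z i ∧ B.Nonempty

/-- `B_h` (of level `h`) is closer than the dam `B_i` (of level `i`). -/
def Closer {G : SimpleGraph V} {S T : Set V} {p : ℕ} (M : MengerFamily G S T p)
    (Z : ℕ → Finset (Sym2 V)) (h i : ℕ) (Bh Bi : Finset (Sym2 V)) : Prop :=
  h < i ∧ M.sig Bh = M.sig Bi ∧ M.Estar Bh ∩ ↑(Z i) = ↑Bi

/-- A closest dam: a dam such that no dam is closer than it. -/
def ClosestDam {G : SimpleGraph V} {S T : Set V} {p : ℕ} (M : MengerFamily G S T p)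
    (Z : ℕ → Finset (Sym2 V)) (k i : ℕ) (B : Finset (Sym2 V)) : Prop :=
  IsDam Z k i B ∧ ¬ ∃ h Bh, IsDam Z k h Bh ∧ Closer M Z h i Bh B

/-!
Every drainage cut `Z i` is crossed exactly once by each Menger path, from the `S` side to the
`T` side, so complementary parts of `Z i` have complementary signatures. If a dam `C ⊆ Z g`
were closer than `Z h \ B`, then `Z g \ C` would be closer than `B`. Its signature is that of
`B` by complementation. Its dry edges on `Z h` are exactly `B`: a path avoiding a dam is wet
all along; and water getting past `Z g \ C` must cross an edge of `C`, after which, up to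
`Z h`, it only reaches vertices that are dry for `C`, since otherwise it would run along a path
up to that path's edge of `Z h`, which lies in `E*(C)`.
-/

open Relation

section Rside

variable {G : SimpleGraph V} {S T : Set V} {X Y : Finset (Sym2 V)} {u v : V}

lemma subset_rside : S ⊆ Rside G X S := fun s hs => ⟨s, hs, .refl s⟩

lemma mem_rside_of_adj (hu : u ∈ Rside G X S) (huv : G.Adj u v) (he : s(u, v) ∉ X) :
    v ∈ Rside G X S := by
  obtain ⟨s, hs, hsu⟩ := hu
  exact ⟨s, hs, hsu.trans ((deleteEdges_adj ..).2 ⟨huv, he⟩).reachable⟩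

lemma mem_of_mem_rside_of_notMem (hu : u ∈ Rside G X S) (hv : v ∉ Rside G X S)
    (huv : G.Adj u v) : s(u, v) ∈ X :=
  not_not.1 fun he => hv (mem_rside_of_adj hu huv he)

lemma EdgeCut.notMem_rside (hX : EdgeCut G S T X) {t : V} (ht : t ∈ T) :
    t ∉ Rside G X S :=
  fun ⟨s, hs, hst⟩ => hX s hs t ht hst

lemma rside_subset_rside (hY : ∀ e ∈ Y, ∀ v ∈ e, v ∉ Rside G X S) :
    Rside G X S ⊆ Rside G Y S := by
  rintro v ⟨s, hs, hsv⟩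
  rw [reachable_iff_reflTransGen] at hsv
  induction hsv with
  | refl => exact subset_rside hs
  | @tail x y hsx hxy ih =>
    have hx : x ∈ Rside G X S := ⟨s, hs, (reachable_iff_reflTransGen _ _).2 hsx⟩
    exact mem_rside_of_adj ih ((deleteEdges_adj ..).1 hxy).1
      fun he => hY _ he x (Sym2.mem_mk_left x y) hx

lemma MinEdgeCut.subset_edgeSet (hX : MinEdgeCut G S T X) : ↑X ⊆ G.edgeSet := by
  classical
  intro e he
  by_contra hne
  have hdel : G.deleteEdges ↑(X.erase e) = G.deleteEdges ↑X := by
    rw [deleteEdges_eq_inter_edgeSet, deleteEdges_eq_inter_edgeSet (s := (X : Set (Sym2 V)))]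
    congr 1
    ext f
    simp only [Finset.coe_erase, Set.mem_inter_iff, Set.mem_sdiff, Finset.mem_coe,
      Set.mem_singleton_iff]
    exact ⟨fun h => ⟨h.1.1, h.2⟩, fun h => ⟨⟨h.1, fun hf => hne (hf ▸ h.2)⟩, h.2⟩⟩
  have hcut : EdgeCut G S T (X.erase e) := by
    simpa only [EdgeCut, hdel] using hX.1
  have hle := hX.2 _ hcut
  rw [Finset.card_erase_of_mem he] at hle
  have hpos := Finset.card_pos.2 ⟨e, he⟩
  omega

lemma notMem_of_mem_edgeSet_deprive {U : Set V} {e : Sym2 V}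
    (he : e ∈ (deprive G U).edgeSet) (hv : v ∈ e) : v ∉ U := by
  induction e using Sym2.ind with
  | _ a b =>
    obtain ⟨-, ha, hb⟩ := he
    rcases Sym2.mem_iff.1 hv with rfl | rfl
    exacts [ha, hb]

lemma exists_reachable_deprive {U : Set V} {a b : V} (w : (G.deleteEdges ↑X).Walk a b)
    (hb : b ∉ U) :
    ∃ v ∉ U, (v = a ∨ ∃ u ∈ U, G.Adj u v) ∧
      ((deprive G U).deleteEdges ↑X).Reachable v b := by
  induction w with
  | nil => exact ⟨_, hb, .inl rfl, .refl _⟩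
  | @cons a c b hac w ih =>
    obtain ⟨v, hvU, hv, hvb⟩ := ih hb
    rw [deleteEdges_adj] at hac
    rcases hv with rfl | hv
    · by_cases haU : a ∈ U
      · exact ⟨v, hvU, .inr ⟨a, haU, hac.1⟩, hvb⟩
      · have had : (deprive G U).Adj a v := ⟨hac.1, haU, hvU⟩
        exact ⟨a, haU, .inl rfl, ((deleteEdges_adj ..).2 ⟨had, hac.2⟩).reachable.trans hvb⟩
    · exact ⟨v, hvU, .inr hv, hvb⟩

end Rside

namespace IsDrainage

variable {G : SimpleGraph V} {S T : Set V} {p k : ℕ} {Z : ℕ → Finset (Sym2 V)} {i : ℕ}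

lemma card (hZ : IsDrainage G S T p k Z) (hi : 1 ≤ i) (hik : i ≤ k) : (Z i).card = p := by
  obtain ⟨n, rfl⟩ := Nat.exists_eq_add_of_le' hi
  cases n with
  | zero => exact hZ.2.2.1
  | succ n => exact (hZ.2.2.2.1 (n + 1) (by omega) (by omega)).2

lemma notMem_rside_of_mem_succ (hZ : IsDrainage G S T p k Z) (hi : 1 ≤ i) (hik : i < k)
    {e : Sym2 V} (he : e ∈ Z (i + 1)) {v : V} (hv : v ∈ e) : v ∉ Rside G (Z i) S :=
  notMem_of_mem_edgeSet_deprive ((hZ.2.2.2.1 i hi hik).1.1.subset_edgeSet he) hv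

lemma rside_mono (hZ : IsDrainage G S T p k Z) {g h : ℕ} (hg : 1 ≤ g) (hgh : g ≤ h)
    (hhk : h ≤ k) : Rside G (Z g) S ⊆ Rside G (Z h) S := by
  induction h, hgh using Nat.le_induction with
  | base => exact subset_rfl
  | succ n hgn ih =>
    exact (ih (by omega)).trans
      (rside_subset_rside fun _ he _ => hZ.notMem_rside_of_mem_succ (by omega) (by omega) he)

lemma notMem_rside_of_mem (hZ : IsDrainage G S T p k Z) {g h : ℕ} (hg : 1 ≤ g) (hgh : g < h)
    (hhk : h ≤ k) {e : Sym2 V} (he : e ∈ Z h) {v : V} (hv : v ∈ e) :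
    v ∉ Rside G (Z g) S := by
  obtain ⟨n, rfl⟩ := Nat.exists_eq_add_of_lt hgh
  exact fun hvg => hZ.notMem_rside_of_mem_succ (by omega) (by omega) he hv
    (hZ.rside_mono hg (by omega) (by omega) hvg)

lemma edgeCut (hZ : IsDrainage G S T p k Z) (hi : 1 ≤ i) (hik : i ≤ k) :
    EdgeCut G S T (Z i) := by
  induction i, hi using Nat.le_induction with
  | base => exact hZ.2.1.1.1
  | succ n hn ih =>
    rintro s hs t ht ⟨w⟩
    obtain ⟨v, hvU, hv, hvt⟩ := exists_reachable_deprive w ((ih (by omega)).notMem_rside ht)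
    rcases hv with rfl | ⟨u, huU, huv⟩
    · exact hvU (subset_rside hs)
    · exact (hZ.2.2.2.1 n hn (by omega)).1.1.1 v
        ⟨hvU, u, mem_of_mem_rside_of_notMem huU hvU huv⟩ t ht hvt

end IsDrainage

namespace MengerFamily

variable {G : SimpleGraph V} {S T : Set V} {p : ℕ} {M : MengerFamily G S T p}
  {X Y B C : Finset (Sym2 V)} {u v : V} {i j : Fin p} {e e' : Sym2 V} {d d' : G.Dart}

lemma edge_mem_edges (hd : d ∈ (M.walk j).darts) : d.edge ∈ (M.walk j).edges :=
  List.mem_map_of_mem hd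

lemma eq_of_mem_edges (hi : e ∈ (M.walk i).edges) (hj : e ∈ (M.walk j).edges) : i = j :=
  not_not.1 fun hij => M.edgeDisj i j hij e hi hj

lemma dart_eq_of_edge_eq (hd : d ∈ (M.walk j).darts) (hd' : d' ∈ (M.walk j).darts)
    (h : d.edge = d'.edge) : d = d' :=
  List.inj_on_of_nodup_map (M.isPath j).isTrail.edges_nodup hd hd' h

lemma adj_of_arc (h : M.Arc u v) : G.Adj u v := by
  obtain ⟨j, ⟨⟨u', v'⟩, huv⟩, -, h⟩ := h
  cases h
  exact huv

lemma exists_exit_dart (hX : EdgeCut G S T X) (j : Fin p) :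
    ∃ d ∈ (M.walk j).darts, d.fst ∈ Rside G X S ∧ d.snd ∉ Rside G X S :=
  (M.walk j).exists_boundary_dart _ (subset_rside (M.ha j)) (hX.notMem_rside (M.hb j))

/-- The `p` exit edges of the Menger paths are distinct and lie in `X`, so they
exhaust `X`. -/
lemma exists_eq_exit_edge (hXp : X.card ≤ p) {d : Fin p → G.Dart}
    (hd : ∀ j, d j ∈ (M.walk j).darts)
    (hexit : ∀ j, (d j).fst ∈ Rside G X S ∧ (d j).snd ∉ Rside G X S) (he : e ∈ X) :
    ∃ j, (d j).edge = e := by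
  classical
  have hinj : Function.Injective fun j => (d j).edge := fun i j hij =>
    M.eq_of_mem_edges (edge_mem_edges (hd i)) ((congrArg _ hij).mpr (edge_mem_edges (hd j)))
  have himage : Finset.univ.image (fun j => (d j).edge) = X := by
    refine Finset.eq_of_subset_of_card_le ?_ ?_
    · simp only [Finset.image_subset_iff, Finset.mem_univ, forall_const]
      exact fun j => mem_of_mem_rside_of_notMem (hexit j).1 (hexit j).2 (d j).adj
    · rw [Finset.card_image_of_injective _ hinj]
      simpa using hXp
  rw [← himage] at he
  simpa using he

lemma exists_exit_dart_of_mem (hX : EdgeCut G S T X) (hXp : X.card ≤ p) (he : e ∈ X) :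
    ∃ j, ∃ d ∈ (M.walk j).darts,
      d.edge = e ∧ d.fst ∈ Rside G X S ∧ d.snd ∉ Rside G X S := by
  choose d hd hexit using M.exists_exit_dart hX
  obtain ⟨j, rfl⟩ := M.exists_eq_exit_edge hXp hd hexit he
  exact ⟨j, d j, hd j, rfl, hexit j⟩

lemma pathEdge_of_mem (hX : EdgeCut G S T X) (hXp : X.card ≤ p) (he : e ∈ X) :
    M.pathEdge e := by
  obtain ⟨j, d, hd, rfl, -⟩ := M.exists_exit_dart_of_mem hX hXp he
  exact ⟨j, edge_mem_edges hd⟩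

lemma eq_of_mem_of_mem_edges (hX : EdgeCut G S T X) (hXp : X.card ≤ p) (he : e ∈ X)
    (he' : e' ∈ X) (hej : e ∈ (M.walk j).edges) (he'j : e' ∈ (M.walk j).edges) : e = e' := by
  choose d hd hexit using M.exists_exit_dart hX
  have key : ∀ e ∈ X, e ∈ (M.walk j).edges → e = (d j).edge := by
    intro e he hej
    obtain ⟨i, rfl⟩ := M.exists_eq_exit_edge hXp hd hexit he
    rw [M.eq_of_mem_edges (edge_mem_edges (hd i)) hej]
  rw [key e he hej, key e' he' he'j]

lemma exit_of_mem (hX : EdgeCut G S T X) (hXp : X.card ≤ p) (hd : d ∈ (M.walk j).darts)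
    (he : d.edge ∈ X) : d.fst ∈ Rside G X S ∧ d.snd ∉ Rside G X S := by
  obtain ⟨i, d', hd', hdd', hexit⟩ := M.exists_exit_dart_of_mem hX hXp he
  obtain rfl := M.eq_of_mem_edges (edge_mem_edges hd') (hdd' ▸ edge_mem_edges hd)
  rwa [← M.dart_eq_of_edge_eq hd' hd hdd']

lemma mem_rside_of_link (hX : EdgeCut G S T X) (hXp : X.card ≤ p)
    (h : M.Arc u v ∨ (G.Adj u v ∧ ¬ M.pathEdge s(u, v))) (hv : v ∈ Rside G X S) :
    u ∈ Rside G X S := by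
  by_contra hu
  have huv : G.Adj u v := h.elim adj_of_arc And.left
  have he : s(u, v) ∈ X := Sym2.eq_swap ▸ mem_of_mem_rside_of_notMem hv hu huv.symm
  rcases h with ⟨j, d, hd, hduv⟩ | ⟨-, hfree⟩
  · have hdu : d.edge = s(u, v) := by simp [Dart.edge, hduv]
    exact hu (by simpa [hduv] using (M.exit_of_mem hX hXp hd (hdu ▸ he)).1)
  · exact hfree (M.pathEdge_of_mem hX hXp he)

lemma reflTransGen_step_of_mem_support {x y : V} (w : G.Walk x y)
    (harc : ∀ d ∈ w.darts, M.Arc d.fst d.snd) (hB : ∀ e ∈ w.edges, e ∉ B)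
    (hv : v ∈ w.support) : ReflTransGen (M.step B) x v := by
  induction w with
  | nil =>
    rw [Walk.support_nil, List.mem_singleton] at hv
    exact hv ▸ .refl
  | cons hadj w ih =>
    rw [Walk.support_cons, List.mem_cons] at hv
    simp only [Walk.darts_cons, Walk.edges_cons, List.mem_cons, forall_eq_or_imp] at harc hB
    rcases hv with rfl | hv
    · exact .refl
    · exact .head ⟨.inl harc.1, hB.1⟩ (ih harc.2 hB.2 hv)

lemma notMem_dryArea_of_notMem_sig (hj : j ∉ M.sig B) (hv : v ∈ (M.walk j).support) :
    v ∉ M.dryArea B :=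
  not_not.2 ⟨M.a j, M.ha j, reflTransGen_step_of_mem_support _
    (fun d hd => ⟨j, d, hd, rfl⟩) (fun e he heB => hj ⟨e, heB, he⟩) hv⟩

lemma mem_Vstar_of_adj (hu : u ∈ M.dryArea B) (huv : G.Adj u v) : v ∈ M.Vstar B := by
  by_cases hv : v ∈ M.dryArea B
  exacts [.inl (.inr hv), .inr ⟨hv, u, .inr hu, huv⟩]

lemma mem_Estar_iff (huv : G.Adj u v) :
    s(u, v) ∈ M.Estar B ↔ u ∈ M.dryArea B ∨ v ∈ M.dryArea B := by
  constructor
  · rintro ⟨a, b, hab, -, ha, -⟩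
    rcases Sym2.eq_iff.1 hab with ⟨rfl, rfl⟩ | ⟨rfl, rfl⟩
    exacts [.inl ha, .inr ha]
  · rintro (hu | hv)
    · exact ⟨u, v, rfl, huv, hu, mem_Vstar_of_adj hu huv⟩
    · exact ⟨v, u, Sym2.eq_swap, huv.symm, hv, mem_Vstar_of_adj hv huv.symm⟩

lemma notMem_Estar_of_notMem_sig (hj : j ∉ M.sig B) (he : e ∈ (M.walk j).edges) :
    e ∉ M.Estar B := by
  obtain ⟨d, hd, rfl⟩ := List.mem_map.1 he
  rw [show d.edge = s(d.fst, d.snd) from rfl, mem_Estar_iff d.adj]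
  rintro (h | h)
  exacts [notMem_dryArea_of_notMem_sig hj (Walk.dart_fst_mem_support_of_mem_darts _ hd) h,
    notMem_dryArea_of_notMem_sig hj (Walk.dart_snd_mem_support_of_mem_darts _ hd) h]

/-- From a wet vertex, the rest of path `j` never returns behind `X` and so would carry the
water across the `Y`-edge of path `j`. -/
lemma mem_dryArea_of_mem_support (hX : EdgeCut G S T X) (hXp : X.card ≤ p)
    (hY : EdgeCut G S T Y) (hCX : C ⊆ X)
    (hE : ∀ e ∈ Y, e ∈ (M.walk j).edges → e ∈ M.Estar C)
    (hv : v ∈ (M.walk j).support) (hvX : v ∉ Rside G X S) (hvY : v ∈ Rside G Y S) :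
    v ∈ M.dryArea C := by
  classical
  rintro ⟨s, hs, hsv⟩
  set σ := (M.walk j).dropUntil v hv
  have hσ : ∀ d ∈ σ.darts, d ∈ (M.walk j).darts := fun d hd =>
    Walk.darts_dropUntil_subset_darts _ _ hd
  have hσX : ∀ w ∈ σ.support, w ∉ Rside G X S := by
    intro w hw hwX
    obtain ⟨d, hd, hd₁, hd₂⟩ :=
      (σ.takeUntil w hw).exists_boundary_dart (Rside G X S)ᶜ hvX (not_not.2 hwX)
    exact hd₁ (M.mem_rside_of_link hX hXp
      (.inl ⟨j, d, hσ d (Walk.darts_takeUntil_subset_darts _ _ hd), rfl⟩) (not_not.1 hd₂))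
  have hwet : ∀ w ∈ σ.support, ReflTransGen (M.step C) s w := by
    refine fun w hw => hsv.trans (reflTransGen_step_of_mem_support σ
      (fun d hd => ⟨j, d, hσ d hd, rfl⟩) ?_ hw)
    intro e he heC
    obtain ⟨d, hd, rfl⟩ := List.mem_map.1 he
    exact hσX _ (Walk.dart_fst_mem_support_of_mem_darts _ hd)
      (M.exit_of_mem hX hXp (hσ d hd) (hCX heC)).1
  obtain ⟨d, hd, hd₁, hd₂⟩ := σ.exists_boundary_dart _ hvY (hY.notMem_rside (M.hb j))
  have hdE := hE _ (mem_of_mem_rside_of_notMem hd₁ hd₂ d.adj) (edge_mem_edges (hσ d hd))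
  rcases (mem_Estar_iff d.adj).1 hdE with h | h
  exacts [h ⟨s, hs, hwet _ (Walk.dart_fst_mem_support_of_mem_darts _ hd)⟩,
    h ⟨s, hs, hwet _ (Walk.dart_snd_mem_support_of_mem_darts _ hd)⟩]

variable [DecidableEq V]

lemma sig_sdiff (hX : EdgeCut G S T X) (hXp : X.card ≤ p) (hYX : Y ⊆ X) :
    M.sig (X \ Y) = (M.sig Y)ᶜ := by
  ext j
  simp only [sig, Set.mem_compl_iff, Set.mem_ofPred_eq, Finset.mem_sdiff]
  constructor
  · rintro ⟨e, ⟨heX, heY⟩, hej⟩ ⟨e', he'Y, he'j⟩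
    exact heY (M.eq_of_mem_of_mem_edges hX hXp (hYX he'Y) heX he'j hej ▸ he'Y)
  · intro hj
    obtain ⟨d, hd, hexit⟩ := M.exists_exit_dart hX j
    exact ⟨d.edge, ⟨mem_of_mem_rside_of_notMem hexit.1 hexit.2 d.adj,
      fun hY => hj ⟨d.edge, hY, edge_mem_edges hd⟩⟩, edge_mem_edges hd⟩

lemma sig_sdiff_eq_of_sig_eq (hX : EdgeCut G S T X) (hXp : X.card ≤ p)
    (hY : EdgeCut G S T Y) (hYp : Y.card ≤ p) (hCX : C ⊆ X) (hBY : B ⊆ Y)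
    (hsig : M.sig C = M.sig (Y \ B)) : M.sig (X \ C) = M.sig B := by
  rw [M.sig_sdiff hX hXp hCX, hsig, M.sig_sdiff hY hYp hBY, compl_compl]

/-- The walk can leave `R(X)` only through an edge of `C`, and afterwards every arc it uses
lies on a path that meets `C`. -/
lemma mem_dryArea_of_reflTransGen (hX : EdgeCut G S T X) (hXp : X.card ≤ p)
    (hY : EdgeCut G S T Y) (hYp : Y.card ≤ p) (hCX : C ⊆ X)
    (hE : ∀ j ∈ M.sig C, ∀ e ∈ Y, e ∈ (M.walk j).edges → e ∈ M.Estar C)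
    {s : V} (hs : s ∈ Rside G X S) (hsv : ReflTransGen (M.step (X \ C)) s v) :
    v ∉ Rside G X S → v ∈ Rside G Y S → v ∈ M.dryArea C := by
  induction hsv with
  | refl => exact fun h => absurd hs h
  | @tail x c _ hxc ih =>
    intro hcX hcY
    obtain ⟨hlink, hxcD⟩ := hxc
    have hxY : x ∈ Rside G Y S := M.mem_rside_of_link hY hYp hlink hcY
    rcases hlink with ⟨j, d, hd, hdxc⟩ | ⟨hxc, hfree⟩
    · have hj : j ∈ M.sig C := by
        by_cases hxX : x ∈ Rside G X S
        · have he : s(x, c) ∈ X :=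
            mem_of_mem_rside_of_notMem hxX hcX (adj_of_arc ⟨j, d, hd, hdxc⟩)
          refine ⟨s(x, c), ?_, by simpa [Dart.edge, hdxc] using edge_mem_edges hd⟩
          by_contra hC
          exact hxcD (Finset.mem_sdiff.2 ⟨he, hC⟩)
        · by_contra hj
          exact notMem_dryArea_of_notMem_sig hj
            (by simpa [hdxc] using Walk.dart_fst_mem_support_of_mem_darts _ hd) (ih hxX hxY)
      exact mem_dryArea_of_mem_support hX hXp hY hCX (hE j hj)
        (by simpa [hdxc] using Walk.dart_snd_mem_support_of_mem_darts _ hd) hcX hcY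
    · have hxX : x ∉ Rside G X S := fun hxX =>
        hfree (M.pathEdge_of_mem hX hXp (mem_of_mem_rside_of_notMem hxX hcX hxc))
      refine fun ⟨s', hs', hs'c⟩ =>
        ih hxX hxY ⟨s', hs', hs'c.tail ⟨.inr ⟨hxc.symm, ?_⟩, ?_⟩⟩
      · rwa [Sym2.eq_swap]
      · exact fun hC => hfree (Sym2.eq_swap ▸ M.pathEdge_of_mem hX hXp (hCX hC))

theorem Estar_sdiff_inter_eq (hX : EdgeCut G S T X) (hXp : X.card ≤ p)
    (hY : EdgeCut G S T Y) (hYp : Y.card ≤ p) (hYX : ∀ e ∈ Y, ∀ v ∈ e, v ∉ Rside G X S)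
    (hCX : C ⊆ X) (hBY : B ⊆ Y) (hsig : M.sig C = M.sig (Y \ B))
    (hE : M.Estar C ∩ ↑Y = ↑(Y \ B)) : M.Estar (X \ C) ∩ ↑Y = ↑B := by
  have hsigD := M.sig_sdiff_eq_of_sig_eq hX hXp hY hYp hCX hBY hsig
  have hEC : ∀ j ∈ M.sig C, ∀ e ∈ Y, e ∈ (M.walk j).edges → e ∈ M.Estar C := by
    intro j hj e he hje
    rw [hsig] at hj
    obtain ⟨e', he', hje'⟩ := hj
    rw [Finset.mem_sdiff] at he'
    rw [M.eq_of_mem_of_mem_edges hY hYp he he'.1 hje hje']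
    exact (hE.symm.subset (Finset.mem_coe.2 (Finset.mem_sdiff.2 he'))).1
  ext e
  simp only [Set.mem_inter_iff, Finset.mem_coe]
  constructor
  · rintro ⟨heE, heY⟩
    by_contra heB
    obtain ⟨j, d, hd, rfl, -⟩ := M.exists_exit_dart_of_mem hY hYp heY
    refine notMem_Estar_of_notMem_sig (j := j) ?_ (edge_mem_edges hd) heE
    rw [hsigD]
    rintro ⟨e'', he''B, he''j⟩
    exact heB (M.eq_of_mem_of_mem_edges hY hYp (hBY he''B) heY he''j (edge_mem_edges hd) ▸ he''B)
  · intro heB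
    obtain ⟨j, d, hd, rfl, hdY, -⟩ := M.exists_exit_dart_of_mem hY hYp (hBY heB)
    refine ⟨(mem_Estar_iff d.adj).2 (.inl ?_), hBY heB⟩
    rintro ⟨s, hs, hsd⟩
    have hj : j ∉ M.sig C := by
      rw [hsig, M.sig_sdiff hY hYp hBY]
      exact not_not.2 ⟨d.edge, heB, edge_mem_edges hd⟩
    exact notMem_dryArea_of_notMem_sig hj (Walk.dart_fst_mem_support_of_mem_darts _ hd)
      (mem_dryArea_of_reflTransGen hX hXp hY hYp hCX hEC (subset_rside hs) hsd
        (hYX _ (hBY heB) _ (Sym2.mem_mk_left _ _)) hdY)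

end MengerFamily

theorem complement_of_closest_dam_closest_general
    [DecidableEq V] (G : SimpleGraph V) (S T : Set V)
    (p k : ℕ) (Z : ℕ → Finset (Sym2 V))
    (hZ : IsDrainage G S T p k Z) (M : MengerFamily G S T p)
    (h : ℕ) (B : Finset (Sym2 V)) (hproper : B ⊂ Z h)
    (hclosest : ClosestDam M Z k h B) :
    ClosestDam M Z k h (Z h \ B) := by
  obtain ⟨⟨hh1, hhk, hBZ, e, heB⟩, hnoCloser⟩ := hclosest
  obtain ⟨x, hxZ, hxB⟩ := Finset.exists_of_ssubset hproper
  refine ⟨⟨hh1, hhk, Finset.sdiff_subset, x, Finset.mem_sdiff.2 ⟨hxZ, hxB⟩⟩, ?_⟩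
  rintro ⟨g, C, ⟨hg1, -, hCZ, -⟩, hgh, hsig, hE⟩
  have hX := hZ.edgeCut hg1 (by omega)
  have hXp := (hZ.card hg1 (by omega)).le
  have hY := hZ.edgeCut hh1 hhk
  have hYp := (hZ.card hh1 hhk).le
  have hsigD := M.sig_sdiff_eq_of_sig_eq hX hXp hY hYp hCZ hBZ hsig
  obtain ⟨j, hj⟩ := M.pathEdge_of_mem hY hYp (hBZ heB)
  obtain ⟨e', he', -⟩ : j ∈ M.sig (Z g \ C) := hsigD ▸ ⟨e, heB, hj⟩
  exact hnoCloser ⟨g, Z g \ C, ⟨hg1, by omega, Finset.sdiff_subset, e', he'⟩, hgh, hsigD,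
    M.Estar_sdiff_inter_eq hX hXp hY hYp (fun _ he _ => hZ.notMem_rside_of_mem hg1 hgh hhk he)
      hCZ hBZ hsig hE⟩

/-- If `B_h ⊊ Z_h` is a closest dam, then its complement
`Z_h \ B_h` is also a closest dam. -/
theorem complement_of_closest_dam_closest
    [Fintype V] [DecidableEq V] (G : SimpleGraph V) (S T : Set V)
    (hST : Disjoint S T) (hS : S.Nonempty) (hT : T.Nonempty)
    (p k : ℕ) (Z : ℕ → Finset (Sym2 V))
    (hmin : ∃ X0 : Finset (Sym2 V), MinEdgeCut G S T X0 ∧ X0.card = p)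
    (hZ : IsDrainage G S T p k Z) (M : MengerFamily G S T p)
    (h : ℕ) (B : Finset (Sym2 V)) (hproper : B ⊂ Z h)
    (hclosest : ClosestDam M Z k h B) :
    ClosestDam M Z k h (Z h \ B) :=
  complement_of_closest_dam_closest_general G S T p k Z hZ M h B hproper hclosest
end
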